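/- arXiv:1611.01115 — 2 statements merged into one kernel-verified Lean document; each statement's English description precedes it below -/
import Mathlib

section
/- The encoding map that sends a taxi walk of length n starting at the origin to the pair (a, σ) is injective, and for every taxi walk the turn-word σ contains no two consecutive occurrences of the letter t. -/
/-!
Every vertex of the oriented Manhattan lattice has exactly one outgoing horizontal and one
outgoing vertical edge, and a walk turns at a vertex exactly when it switches between the two.
Hence the start, the first step and the turn-word determine the walk vertex by vertex.
That a turn-word never has two consecutive `t`s is built into the definition of a taxi walk.
-/

open Filter

/-- The oriented step relation of the Manhattan lattice. -/
def taxiStep (u v : ℤ × ℤ) : Prop :=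
  (Even u.2 ∧ v = (u.1 + 1, u.2)) ∨
  (Odd u.2 ∧ v = (u.1 - 1, u.2)) ∨
  (Even u.1 ∧ v = (u.1, u.2 + 1)) ∨
  (Odd u.1 ∧ v = (u.1, u.2 - 1))

/-- Perpendicularity of two step vectors. -/
def perp (d e : ℤ × ℤ) : Prop := d.1 * e.1 + d.2 * e.2 = 0

instance (d e : ℤ × ℤ) : Decidable (perp d e) := by unfold perp; infer_instance

/-- The walk `l` turns at its `i`-th vertex (meaningful for `1 ≤ i ≤ l.length - 2`). -/
def turnAt (l : List (ℤ × ℤ)) (i : ℕ) : Prop :=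
  perp (l.getD i 0 - l.getD (i - 1) 0) (l.getD (i + 1) 0 - l.getD i 0)

instance (l : List (ℤ × ℤ)) (i : ℕ) : Decidable (turnAt l i) := by
  unfold turnAt; infer_instance

/-- A taxi walk, recorded as its list of vertices (a walk of length `n` has `n + 1` vertices). -/
def IsTaxiWalk (l : List (ℤ × ℤ)) : Prop :=
  l ≠ [] ∧ l.Nodup ∧
  (∀ i, i + 1 < l.length → taxiStep (l.getD i 0) (l.getD (i + 1) 0)) ∧
  (∀ i, 1 ≤ i → i + 2 < l.length → ¬(turnAt l i ∧ turnAt l (i + 1)))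

/-- The set of taxi walks of length `n` starting at the origin. -/
def originWalks (n : ℕ) : Set (List (ℤ × ℤ)) :=
  {l | IsTaxiWalk l ∧ l.length = n + 1 ∧ l.getD 0 0 = 0}

/-- `taxiCount n` is `c_n`, the number of taxi walks of length `n` starting at the origin. -/
noncomputable def taxiCount (n : ℕ) : ℕ := (originWalks n).ncard

/-- The turn-word of a walk: `true` (the letter `t`) where the walk turns,
`false` (the letter `s`) where it goes straight. -/
def turnWord (l : List (ℤ × ℤ)) : List Bool :=
  (List.range (l.length - 2)).map fun i => decide (turnAt l (i + 1))

/-- The encoding of a taxi walk starting at the origin: the first coordinate is `true`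
(for `N`) if `v₁ = (0,1)` and `false` (for `E`) if `v₁ = (1,0)`; the second is the turn-word. -/
def encode (l : List (ℤ × ℤ)) : Bool × List Bool :=
  (decide (l.getD 1 0 = (0, 1)), turnWord l)

/-- A bridge: a taxi walk from `(0,0)` to `(1,0)` staying at abscissa `≥ 1` after the start,
whose last step is horizontal and ends at maximal abscissa. -/
def IsBridge (l : List (ℤ × ℤ)) : Prop :=
  IsTaxiWalk l ∧ 2 ≤ l.length ∧ l.getD 0 0 = (0, 0) ∧ l.getD 1 0 = (1, 0) ∧
  (∀ i, 1 ≤ i → i < l.length → 1 ≤ (l.getD i 0).1) ∧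
  (l.getD (l.length - 1) 0).2 = (l.getD (l.length - 2) 0).2 ∧
  (∀ i, i < l.length → (l.getD i 0).1 ≤ (l.getD (l.length - 1) 0).1)

/-- `bridgeCount n` is `b_n`, the number of bridges of length `n`, with `b_0 = 1`. -/
noncomputable def bridgeCount : ℕ → ℕ
  | 0 => 1
  | n + 1 => {l : List (ℤ × ℤ) | IsBridge l ∧ l.length = n + 2}.ncard

/-- The normalizing symmetry `f_{(x,y)}` of the oriented Manhattan lattice. -/
def normMap (p : ℤ × ℤ) (q : ℤ × ℤ) : ℤ × ℤ :=
  if Even p.1 then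
    (if Even p.2 then (q.1 - p.1, q.2 - p.2) else (-(q.1 - p.1), q.2 - p.2))
  else
    (if Even p.2 then (q.1 - p.1, -(q.2 - p.2)) else (-(q.1 - p.1), -(q.2 - p.2)))

/-- The vertex `v_i` is a cutvertex of the bridge `l`. -/
def IsCutAt (l : List (ℤ × ℤ)) (i : ℕ) : Prop :=
  0 < i ∧ i + 1 < l.length ∧
  IsBridge (l.take (i + 1)) ∧
  l.getD (i + 1) 0 = l.getD i 0 + (1, 0) ∧
  IsBridge ((l.drop i).map (normMap (l.getD i 0)))

/-- An irreducible bridge: a bridge with no cutvertex. -/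
def IsIrreducibleBridge (l : List (ℤ × ℤ)) : Prop :=
  IsBridge l ∧ ∀ i, ¬ IsCutAt l i

/-- `irrBridgeCount n` is `a_n`, the number of irreducible bridges of length `n`, with `a_0 = 0`. -/
noncomputable def irrBridgeCount : ℕ → ℕ
  | 0 => 0
  | n + 1 => {l : List (ℤ × ℤ) | IsIrreducibleBridge l ∧ l.length = n + 2}.ncard

lemma taxiStep_eq_of_horizontal_iff {u v w : ℤ × ℤ} (hv : taxiStep u v) (hw : taxiStep u w)
    (h : v.2 = u.2 ↔ w.2 = u.2) : v = w := by
  simp only [taxiStep, Int.even_iff, Int.odd_iff] at hv hw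
  rcases hv with ⟨_, rfl⟩ | ⟨_, rfl⟩ | ⟨_, rfl⟩ | ⟨_, rfl⟩ <;>
    rcases hw with ⟨_, rfl⟩ | ⟨_, rfl⟩ | ⟨_, rfl⟩ | ⟨_, rfl⟩ <;>
    simp_all

lemma perp_sub_iff_of_taxiStep {u v w : ℤ × ℤ} (hv : taxiStep u v) (hw : taxiStep v w) :
    perp (v - u) (w - v) ↔ (v.2 = u.2 ↔ w.2 ≠ v.2) := by
  simp only [taxiStep, Int.even_iff, Int.odd_iff] at hv hw
  rcases hv with ⟨_, rfl⟩ | ⟨_, rfl⟩ | ⟨_, rfl⟩ | ⟨_, rfl⟩ <;>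
    rcases hw with ⟨_, rfl⟩ | ⟨_, rfl⟩ | ⟨_, rfl⟩ | ⟨_, rfl⟩ <;>
    simp [perp] at *
  omega

lemma eq_of_taxiStep_zero {v : ℤ × ℤ} (h : taxiStep 0 v) : v = (1, 0) ∨ v = (0, 1) := by
  simp only [taxiStep, Int.even_iff, Int.odd_iff] at h
  rcases h with ⟨_, rfl⟩ | ⟨_, rfl⟩ | ⟨_, rfl⟩ | ⟨_, rfl⟩ <;> simp_all

lemma length_turnWord (l : List (ℤ × ℤ)) : (turnWord l).length = l.length - 2 := by
  simp [turnWord]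

lemma turnWord_getD {l : List (ℤ × ℤ)} {i : ℕ} (h : i < l.length - 2) :
    (turnWord l).getD i false = decide (turnAt l (i + 1)) := by
  rw [List.getD_eq_getElem _ _ (by rwa [length_turnWord])]
  simp [turnWord]

lemma turnAt_iff_of_turnWord_eq {l₁ l₂ : List (ℤ × ℤ)} (hlen : l₁.length = l₂.length)
    (hword : turnWord l₁ = turnWord l₂) {i : ℕ} (hi : i < l₁.length - 2) :
    turnAt l₁ (i + 1) ↔ turnAt l₂ (i + 1) := by
  simpa only [turnWord_getD hi, turnWord_getD (hlen ▸ hi), decide_eq_decide] using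
    congrArg (·.getD i false) hword

def IsTaxiPath (l : List (ℤ × ℤ)) : Prop :=
  ∀ i, i + 1 < l.length → taxiStep (l.getD i 0) (l.getD (i + 1) 0)

lemma IsTaxiWalk.isTaxiPath {l : List (ℤ × ℤ)} (hl : IsTaxiWalk l) : IsTaxiPath l :=
  hl.2.2.1

lemma IsTaxiPath.turnAt_succ_iff {l : List (ℤ × ℤ)} (hl : IsTaxiPath l) {j : ℕ}
    (hj : j + 2 < l.length) :
    turnAt l (j + 1) ↔
      ((l.getD (j + 1) 0).2 = (l.getD j 0).2 ↔ (l.getD (j + 2) 0).2 ≠ (l.getD (j + 1) 0).2) :=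
  perp_sub_iff_of_taxiStep (hl j (by omega)) (hl (j + 1) hj)

lemma IsTaxiPath.eq_of_turnWord_eq {l₁ l₂ : List (ℤ × ℤ)} (hl₁ : IsTaxiPath l₁)
    (hl₂ : IsTaxiPath l₂) (hlen : l₁.length = l₂.length) (h₀ : l₁.getD 0 0 = l₂.getD 0 0)
    (h₁ : l₁.getD 1 0 = l₂.getD 1 0) (hword : turnWord l₁ = turnWord l₂) : l₁ = l₂ := by
  have hpair : ∀ k, l₁.getD k 0 = l₂.getD k 0 ∧ l₁.getD (k + 1) 0 = l₂.getD (k + 1) 0 := by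
    intro k
    induction k with
    | zero => exact ⟨h₀, h₁⟩
    | succ j ih =>
      refine ⟨ih.2, ?_⟩
      by_cases hj : j + 2 < l₁.length
      · have hturn := turnAt_iff_of_turnWord_eq hlen hword (i := j) (by omega)
        rw [hl₁.turnAt_succ_iff hj, hl₂.turnAt_succ_iff (by omega), ih.1, ih.2] at hturn
        have hb₁ := hl₁ (j + 1) hj
        rw [ih.2] at hb₁
        exact taxiStep_eq_of_horizontal_iff hb₁ (hl₂ (j + 1) (by omega)) (by tauto)
      · rw [List.getD_eq_default _ _ (by omega), List.getD_eq_default _ _ (by omega)]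
  refine List.ext_getElem hlen fun i hi₁ hi₂ => ?_
  have := (hpair i).1
  rwa [List.getD_eq_getElem _ _ hi₁, List.getD_eq_getElem _ _ hi₂] at this

lemma IsTaxiPath.getD_one_eq_of_encode_eq {l₁ l₂ : List (ℤ × ℤ)} (hl₁ : IsTaxiPath l₁)
    (hl₂ : IsTaxiPath l₂) (hlen : l₁.length = l₂.length) (h₀₁ : l₁.getD 0 0 = 0)
    (h₀₂ : l₂.getD 0 0 = 0) (henc : encode l₁ = encode l₂) : l₁.getD 1 0 = l₂.getD 1 0 := by
  rcases Nat.lt_or_ge 1 l₁.length with hlong | hshort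
  · have hfirst₁ := hl₁ 0 hlong
    have hfirst₂ := hl₂ 0 (by omega)
    rw [h₀₁] at hfirst₁
    rw [h₀₂] at hfirst₂
    have hdir : l₁.getD 1 0 = (0, 1) ↔ l₂.getD 1 0 = (0, 1) := by
      simpa [encode] using congrArg Prod.fst henc
    rcases eq_of_taxiStep_zero hfirst₁ with e₁ | e₁ <;>
      rcases eq_of_taxiStep_zero hfirst₂ with e₂ | e₂ <;> simp_all
  · rw [List.getD_eq_default _ _ hshort, List.getD_eq_default _ _ (hlen ▸ hshort)]

lemma IsTaxiWalk.not_turnWord_consecutive {l : List (ℤ × ℤ)} (hl : IsTaxiWalk l) {i : ℕ}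
    (hi : i + 1 < (turnWord l).length) :
    ¬((turnWord l).getD i false = true ∧ (turnWord l).getD (i + 1) false = true) := by
  rw [length_turnWord] at hi
  rw [turnWord_getD (by omega), turnWord_getD hi, decide_eq_true_iff, decide_eq_true_iff]
  exact hl.2.2.2 (i + 1) le_add_self (by omega)

/-- The encoding map sending a taxi walk of length `n` starting at the
origin to the pair `(a, σ)` is injective, and for every taxi walk starting at the origin the
turn-word `σ` contains no two consecutive occurrences of the letter `t` (here `t = true`). -/
theorem encode_injective_and_no_two_consecutive_turns :
    (∀ (n : ℕ) (l₁ l₂ : List (ℤ × ℤ)), l₁ ∈ originWalks n → l₂ ∈ originWalks n →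
      encode l₁ = encode l₂ → l₁ = l₂) ∧
    (∀ (n : ℕ) (l : List (ℤ × ℤ)), l ∈ originWalks n →
      ∀ i, i + 1 < (turnWord l).length →
        ¬((turnWord l).getD i false = true ∧ (turnWord l).getD (i + 1) false = true)) := by
  constructor
  · rintro n l₁ l₂ ⟨hl₁, hlen₁, h₀₁⟩ ⟨hl₂, hlen₂, h₀₂⟩ henc
    have hlen : l₁.length = l₂.length := hlen₁.trans hlen₂.symm
    have h₁ := hl₁.isTaxiPath.getD_one_eq_of_encode_eq hl₂.isTaxiPath hlen h₀₁ h₀₂ henc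
    exact hl₁.isTaxiPath.eq_of_turnWord_eq hl₂.isTaxiPath hlen (h₀₁.trans h₀₂.symm) h₁
      (congrArg Prod.snd henc)
  · rintro n l ⟨hl, -, -⟩ i hi
    exact hl.not_turnWord_consecutive hi
end

section
/- For all integers n, m ≥ 0, the number of bridges satisfies b_{n+m} ≥ b_n · b_m. -/
open Filter

/-!
Gluing a bridge `r` onto the endpoint `v` of a bridge `l` gives a bridge. The last step of `l`
points east, so `v` lies on an eastward row, and the lattice symmetry `(normMap v)⁻¹` carries `r`
to a walk from `v` whose first step is again eastward: the junction goes straight, so the rule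
against two consecutive turns survives. Every vertex of `l` has abscissa at most `v.1` and every
later vertex of the moved `r` has abscissa larger than `v.1`, so the concatenation is
self-avoiding and ends at maximal abscissa. As the length of `l` is fixed, both pieces can be read
off the concatenation, which gives an injection from pairs of bridges of lengths `n` and `m` into
bridges of length `n + m`.
-/

def normMapInv (p q : ℤ × ℤ) : ℤ × ℤ :=
  (p.1 + (if Even p.2 then q.1 else -q.1), p.2 + (if Even p.1 then q.2 else -q.2))

section NormMapInv

variable (p : ℤ × ℤ)

theorem normMap_normMapInv : Function.LeftInverse (normMap p) (normMapInv p) := by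
  intro q
  unfold normMap normMapInv
  by_cases h1 : Even p.1 <;> by_cases h2 : Even p.2 <;> simp [h1, h2]

theorem normMapInv_injective : Function.Injective (normMapInv p) :=
  (normMap_normMapInv p).injective

@[simp]
theorem normMapInv_zero : normMapInv p 0 = p := by
  simp [normMapInv]

theorem normMapInv_snd_eq_iff {q q' : ℤ × ℤ} :
    (normMapInv p q).2 = (normMapInv p q').2 ↔ q.2 = q'.2 := by
  by_cases h : Even p.1 <;> simp [normMapInv, h]

theorem taxiStep_normMapInv {u w : ℤ × ℤ} (h : taxiStep u w) :
    taxiStep (normMapInv p u) (normMapInv p w) := by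
  rcases Int.even_or_odd p.1 with h1 | h1 <;> rcases Int.even_or_odd p.2 with h2 | h2 <;>
  rcases h with ⟨hu, rfl⟩ | ⟨hu, rfl⟩ | ⟨hu, rfl⟩ | ⟨hu, rfl⟩ <;>
  simp only [taxiStep, normMapInv, h1, h2, Int.not_even_iff_odd.mpr, if_true, if_false,
    Prod.mk.injEq] <;>
  simp only [Int.even_iff, Int.odd_iff, and_true, true_and] at h1 h2 hu ⊢ <;> omega

theorem normMapInv_sub (a b : ℤ × ℤ) :
    normMapInv p a - normMapInv p b =
      (if Even p.2 then a.1 - b.1 else -(a.1 - b.1),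
        if Even p.1 then a.2 - b.2 else -(a.2 - b.2)) := by
  by_cases h1 : Even p.1 <;> by_cases h2 : Even p.2 <;>
    simp [normMapInv, h1, h2, Prod.ext_iff] <;> omega

theorem perp_normMapInv_sub (a b c d : ℤ × ℤ) :
    perp (normMapInv p a - normMapInv p b) (normMapInv p c - normMapInv p d) ↔
      perp (a - b) (c - d) := by
  rw [normMapInv_sub, normMapInv_sub]
  unfold perp
  by_cases h1 : Even p.1 <;> by_cases h2 : Even p.2 <;> simp [h1, h2] <;> ring_nf

end NormMapInv

theorem normMapInv_fst_of_even {p : ℤ × ℤ} (hp : Even p.2) (q : ℤ × ℤ) :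
    (normMapInv p q).1 = p.1 + q.1 := by
  simp [normMapInv, hp]

namespace List

variable {α : Type*}

theorem forall_getD_iff_forall_mem {l : List α} {d : α} {P : α → Prop} :
    (∀ i < l.length, P (l.getD i d)) ↔ ∀ a ∈ l, P a := by
  simp only [mem_iff_getElem]
  constructor
  · rintro h a ⟨i, hi, rfl⟩
    rw [← getD_eq_getElem _ d hi]
    exact h i hi
  · intro h i hi
    rw [getD_eq_getElem _ _ hi]
    exact h _ ⟨i, hi, rfl⟩

theorem forall_getD_tail_iff_forall_mem_tail {l : List α} {d : α} {P : α → Prop} :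
    (∀ i, 1 ≤ i → i < l.length → P (l.getD i d)) ↔ ∀ a ∈ l.tail, P a := by
  rw [← forall_getD_iff_forall_mem (d := d)]
  cases l with
  | nil => simp
  | cons a t =>
    constructor
    · intro h i hi
      exact h (i + 1) (by omega) (by simpa using hi)
    · rintro h (_ | i) h1 hi
      · omega
      · exact h i (by simpa using hi)

theorem getD_append_tail_of_le {l r : List α} {d : α} (hl : l ≠ [])
    (hjoin : l.getD (l.length - 1) d = r.getD 0 d) {i : ℕ} (hi : l.length - 1 ≤ i) :
    (l ++ r.tail).getD i d = r.getD (i - (l.length - 1)) d := by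
  have hlen : 0 < l.length := length_pos_iff.mpr hl
  obtain ⟨j, rfl⟩ := Nat.exists_eq_add_of_le hi
  rcases j with _ | j
  · rw [Nat.add_zero, getD_append _ _ _ _ (by omega), hjoin, Nat.sub_self]
  · rw [show l.length - 1 + (j + 1) = l.length + j by omega, getD_append_right _ _ _ _ (by omega),
      show l.length + j - (l.length - 1) = j + 1 by omega, Nat.add_sub_cancel_left]
    cases r <;> simp

theorem getD_map_of_lt {β : Type*} {l : List α} (f : α → β) {d : α} {d' : β} {i : ℕ}
    (hi : i < l.length) : (l.map f).getD i d' = f (l.getD i d) := by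
  simp [hi]

end List

section TaxiWalk

variable {l r : List (ℤ × ℤ)} {i : ℕ}

theorem turnAt_append_of_lt (t : List (ℤ × ℤ)) (hi : i + 1 < l.length) :
    turnAt (l ++ t) i ↔ turnAt l i := by
  unfold turnAt
  rw [List.getD_append _ _ _ _ (by omega), List.getD_append _ _ _ _ (by omega),
    List.getD_append _ _ _ _ hi]

theorem turnAt_append_tail_of_le (hl : l ≠ []) (hjoin : l.getD (l.length - 1) 0 = r.getD 0 0)
    (hi : l.length ≤ i) : turnAt (l ++ r.tail) i ↔ turnAt r (i - (l.length - 1)) := by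
  have hright {j : ℕ} (hj : l.length - 1 ≤ j) :=
    List.getD_append_tail_of_le (d := 0) hl hjoin hj
  unfold turnAt
  rw [hright (by omega), hright (by omega), hright (by omega),
    show i - 1 - (l.length - 1) = i - (l.length - 1) - 1 by omega,
    show i + 1 - (l.length - 1) = i - (l.length - 1) + 1 by omega]

theorem turnAt_map_normMapInv (p : ℤ × ℤ) (hi : i + 1 < l.length) :
    turnAt (l.map (normMapInv p)) i ↔ turnAt l i := by
  unfold turnAt
  rw [List.getD_map_of_lt _ (d := 0) hi, List.getD_map_of_lt _ (d := 0) (by omega : i < l.length),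
    List.getD_map_of_lt _ (d := 0) (by omega : i - 1 < l.length), perp_normMapInv_sub]

theorem IsTaxiWalk.map_normMapInv (p : ℤ × ℤ) (hl : IsTaxiWalk l) :
    IsTaxiWalk (l.map (normMapInv p)) := by
  obtain ⟨hne, hnd, hstep, hturn⟩ := hl
  refine ⟨by simpa using hne, hnd.map (normMapInv_injective p), fun i hi => ?_,
    fun i h1 hi => ?_⟩ <;> rw [List.length_map] at hi
  · rw [List.getD_map_of_lt _ (d := 0) hi,
      List.getD_map_of_lt _ (d := 0) (by omega : i < l.length)]
    exact taxiStep_normMapInv p (hstep i hi)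
  · rw [turnAt_map_normMapInv p (by omega), turnAt_map_normMapInv p (by omega)]
    exact hturn i h1 hi

theorem IsTaxiWalk.append_tail (hl : IsTaxiWalk l) (hr : IsTaxiWalk r)
    (hjoin : l.getD (l.length - 1) 0 = r.getD 0 0) (hdisj : l.Disjoint r.tail)
    (hstraight : ¬ perp (l.getD (l.length - 1) 0 - l.getD (l.length - 2) 0)
      (r.getD 1 0 - r.getD 0 0)) :
    IsTaxiWalk (l ++ r.tail) := by
  obtain ⟨hlne, hlnd, hlstep, hlturn⟩ := hl
  obtain ⟨hrne, hrnd, hrstep, hrturn⟩ := hr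
  have hL := List.length_pos_iff.mpr hlne
  have hR := List.length_pos_iff.mpr hrne
  have hlen : (l ++ r.tail).length = l.length - 1 + r.length := by
    simp only [List.length_append, List.length_tail]
    omega
  have hright {j : ℕ} (hj : l.length - 1 ≤ j) :=
    List.getD_append_tail_of_le (d := 0) hlne hjoin hj
  have hjunction : ¬ turnAt (l ++ r.tail) (l.length - 1) := by
    rw [← hjoin] at hstraight
    have hlast := List.getD_append l r.tail 0 (l.length - 1) (by omega)
    unfold turnAt
    rwa [show l.length - 1 - 1 = l.length - 2 by omega, hlast,
      List.getD_append _ _ _ _ (by omega), hright le_self_add, Nat.add_sub_cancel_left]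
  have hnd : (l ++ r.tail).Nodup :=
    List.nodup_append'.mpr ⟨hlnd, hrnd.sublist (List.tail_sublist r), hdisj⟩
  refine ⟨by simp [hlne], hnd, fun i hi => ?_, fun i h1 hi => ?_⟩ <;> rw [hlen] at hi
  · rcases lt_or_ge (i + 1) l.length with h | h
    · rw [List.getD_append _ _ _ _ (by omega), List.getD_append _ _ _ _ h]
      exact hlstep i h
    · rw [hright (by omega), hright (by omega),
        show i + 1 - (l.length - 1) = i - (l.length - 1) + 1 by omega]
      exact hrstep _ (by omega)
  · rintro ⟨t1, t2⟩
    rcases lt_or_ge (i + 2) l.length with h | h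
    · rw [turnAt_append_of_lt _ (by omega)] at t1 t2
      exact hlturn i h1 h ⟨t1, t2⟩
    rcases lt_or_ge i l.length with h' | h'
    · obtain hi | hi : i + 1 = l.length - 1 ∨ i = l.length - 1 := by omega
      · exact hjunction (hi ▸ t2)
      · exact hjunction (hi ▸ t1)
    · rw [turnAt_append_tail_of_le hlne hjoin h'] at t1
      rw [turnAt_append_tail_of_le hlne hjoin (by omega),
        show i + 1 - (l.length - 1) = i - (l.length - 1) + 1 by omega] at t2
      exact hrturn _ (by omega) (by omega) ⟨t1, t2⟩

end TaxiWalk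

section Bridge

variable {l r : List (ℤ × ℤ)}

theorem IsBridge.one_le_fst (hl : IsBridge l) : ∀ a ∈ l.tail, 1 ≤ a.1 :=
  List.forall_getD_tail_iff_forall_mem_tail.mp hl.2.2.2.2.1

theorem IsBridge.fst_le_last (hl : IsBridge l) : ∀ a ∈ l, a.1 ≤ (l.getD (l.length - 1) 0).1 :=
  List.forall_getD_iff_forall_mem.mp hl.2.2.2.2.2.2

theorem IsBridge.last_step (hl : IsBridge l) :
    Even (l.getD (l.length - 1) 0).2 ∧
      l.getD (l.length - 2) 0 = l.getD (l.length - 1) 0 - (1, 0) := by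
  obtain ⟨⟨-, -, hstep, -⟩, h2, -, -, -, hy, hmax⟩ := hl
  have hs := hstep (l.length - 2) (by omega)
  rw [show l.length - 2 + 1 = l.length - 1 by omega] at hs
  have hle := hmax (l.length - 2) (by omega)
  generalize l.getD (l.length - 2) 0 = u at *
  generalize l.getD (l.length - 1) 0 = v at *
  rcases hs with ⟨he, rfl⟩ | ⟨-, rfl⟩ | ⟨-, rfl⟩ | ⟨-, rfl⟩
  · exact ⟨he, by simp⟩
  all_goals simp at hle hy

def glue (l r : List (ℤ × ℤ)) : List (ℤ × ℤ) :=
  l ++ (r.map (normMapInv (l.getD (l.length - 1) 0))).tail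

theorem glue_length (l r : List (ℤ × ℤ)) : (glue l r).length = l.length + (r.length - 1) := by
  simp [glue]

theorem getD_glue (hl : l ≠ []) (hr : r.getD 0 0 = (0, 0)) {j : ℕ} (hj : j < r.length) :
    (glue l r).getD (l.length - 1 + j) 0 = normMapInv (l.getD (l.length - 1) 0) (r.getD j 0) := by
  have hjoin :
      l.getD (l.length - 1) 0 = (r.map (normMapInv (l.getD (l.length - 1) 0))).getD 0 0 := by
    rw [List.getD_map_of_lt _ (d := 0) (by omega), hr, Prod.mk_zero_zero, normMapInv_zero]
  rw [glue, List.getD_append_tail_of_le hl hjoin le_self_add, Nat.add_sub_cancel_left,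
    List.getD_map_of_lt _ hj]

theorem IsBridge.fst_lt_of_mem_tail_map (hr : IsBridge r) {v : ℤ × ℤ} (hv : Even v.2) :
    ∀ b ∈ (r.map (normMapInv v)).tail, v.1 < b.1 := by
  rw [← List.map_tail]
  rintro _ hb
  obtain ⟨q, hq, rfl⟩ := List.mem_map.mp hb
  rw [normMapInv_fst_of_even hv]
  linarith [hr.one_le_fst q hq]

theorem isTaxiWalk_glue (hl : IsBridge l) (hr : IsBridge r) : IsTaxiWalk (glue l r) := by
  obtain ⟨hv, hprev⟩ := hl.last_step
  set v := l.getD (l.length - 1) 0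
  have hdisj : l.Disjoint (r.map (normMapInv v)).tail := fun a ha ha' =>
    (hl.fst_le_last a ha).not_gt (hr.fst_lt_of_mem_tail_map hv a ha')
  obtain ⟨hlw, hl2, -⟩ := hl
  obtain ⟨hrw, hr2, hr0, hr1, -⟩ := hr
  have hr'0 : (r.map (normMapInv v)).getD 0 0 = v := by
    rw [List.getD_map_of_lt _ (d := 0) (by omega), hr0, Prod.mk_zero_zero, normMapInv_zero]
  have hr'1 : (r.map (normMapInv v)).getD 1 0 = v + (1, 0) := by
    rw [List.getD_map_of_lt _ (d := 0) (by omega), hr1]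
    simp [normMapInv, hv, Prod.ext_iff]
  refine hlw.append_tail (hrw.map_normMapInv v) hr'0.symm hdisj ?_
  rw [hprev, hr'0, hr'1, sub_sub_cancel, add_sub_cancel_left]
  simp [perp]

theorem getD_glue_last (hl : l ≠ []) (hr : r ≠ []) (hr0 : r.getD 0 0 = (0, 0)) :
    (glue l r).getD ((glue l r).length - 1) 0 =
      normMapInv (l.getD (l.length - 1) 0) (r.getD (r.length - 1) 0) := by
  have := List.length_pos_iff.mpr hl
  have := List.length_pos_iff.mpr hr
  rw [glue_length, show l.length + (r.length - 1) - 1 = l.length - 1 + (r.length - 1) by omega,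
    getD_glue hl hr0 (by omega)]

theorem one_le_fst_of_mem_tail_glue (hl : IsBridge l) (hr : IsBridge r) :
    ∀ a ∈ (glue l r).tail, 1 ≤ a.1 := by
  obtain ⟨hv, -⟩ := hl.last_step
  have hl2 := hl.2.1
  have hv1 : 1 ≤ (l.getD (l.length - 1) 0).1 := hl.2.2.2.2.1 _ (by omega) (by omega)
  simp only [glue, List.tail_append_of_ne_nil hl.1.1, List.mem_append]
  rintro a (ha | ha)
  · exact hl.one_le_fst a ha
  · linarith [hr.fst_lt_of_mem_tail_map hv a ha]

theorem fst_le_last_of_mem_glue (hl : IsBridge l) (hr : IsBridge r) :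
    ∀ a ∈ glue l r, a.1 ≤ ((glue l r).getD ((glue l r).length - 1) 0).1 := by
  obtain ⟨hv, -⟩ := hl.last_step
  rw [getD_glue_last hl.1.1 hr.1.1 hr.2.2.1, normMapInv_fst_of_even hv]
  have hr2 := hr.2.1
  have hrlast : 1 ≤ (r.getD (r.length - 1) 0).1 := hr.2.2.2.2.1 _ (by omega) (by omega)
  simp only [glue, List.mem_append]
  rintro a (ha | ha)
  · linarith [hl.fst_le_last a ha]
  · rw [← List.map_tail] at ha
    obtain ⟨q, hq, rfl⟩ := List.mem_map.mp ha
    rw [normMapInv_fst_of_even hv]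
    linarith [hr.fst_le_last q (List.mem_of_mem_tail hq)]

theorem isBridge_glue (hl : IsBridge l) (hr : IsBridge r) : IsBridge (glue l r) := by
  have hw := isTaxiWalk_glue hl hr
  have hx := one_le_fst_of_mem_tail_glue hl hr
  have hmax := fst_le_last_of_mem_glue hl hr
  have hlast := getD_glue_last hl.1.1 hr.1.1 hr.2.2.1
  obtain ⟨⟨hlne, -⟩, hl2, hl0, hl1, -⟩ := hl
  obtain ⟨-, hr2, hr0, -, -, hry, -⟩ := hr
  refine ⟨hw, by rw [glue_length]; omega, ?_, ?_,
    List.forall_getD_tail_iff_forall_mem_tail.mpr hx, ?_,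
    List.forall_getD_iff_forall_mem.mpr hmax⟩
  · rwa [glue, List.getD_append _ _ _ _ (by omega)]
  · rwa [glue, List.getD_append _ _ _ _ (by omega)]
  · rw [hlast, glue_length,
      show l.length + (r.length - 1) - 2 = l.length - 1 + (r.length - 2) by omega,
      getD_glue hlne hr0 (by omega), normMapInv_snd_eq_iff]
    exact hry

end Bridge

theorem glue_inj {l l' r r' : List (ℤ × ℤ)} (hlen : l.length = l'.length) (hr : r ≠ [])
    (hr' : r' ≠ []) (hr0 : r.getD 0 0 = r'.getD 0 0) (h : glue l r = glue l' r') :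
    l = l' ∧ r = r' := by
  obtain rfl : l = l' := by
    have := congrArg (List.take l.length) h
    rwa [glue, glue, List.take_left' rfl, List.take_left' hlen.symm] at this
  have htail : r.tail = r'.tail := by
    refine List.map_injective_iff.mpr (normMapInv_injective (l.getD (l.length - 1) 0)) ?_
    have := congrArg (List.drop l.length) h
    rwa [glue, glue, List.drop_left' rfl, List.drop_left' rfl, ← List.map_tail,
      ← List.map_tail] at this
  refine ⟨rfl, ?_⟩
  cases r with
  | nil => contradiction
  | cons a t =>
    cases r' with
    | nil => contradiction
    | cons a' t' => simp_all

theorem taxiStep_abs_sub_le {u w : ℤ × ℤ} (h : taxiStep u w) :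
    |w.1 - u.1| ≤ 1 ∧ |w.2 - u.2| ≤ 1 := by
  rcases h with ⟨-, rfl⟩ | ⟨-, rfl⟩ | ⟨-, rfl⟩ | ⟨-, rfl⟩ <;> simp

theorem IsTaxiWalk.abs_getD_le {l : List (ℤ × ℤ)} (hl : IsTaxiWalk l) (h0 : l.getD 0 0 = 0) :
    ∀ i < l.length, |(l.getD i 0).1| ≤ i ∧ |(l.getD i 0).2| ≤ i := by
  intro i
  induction i with
  | zero =>
    intro _
    rw [h0]
    simp
  | succ i ih =>
    intro hi
    have := ih (by omega)
    have := taxiStep_abs_sub_le (hl.2.2.1 i hi)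
    simp only [abs_le] at *
    push_cast
    omega

theorem List.finite_length_eq_of_forall_mem {α : Type*} {s : Set α} (hs : s.Finite) (n : ℕ) :
    {l : List α | l.length = n ∧ ∀ a ∈ l, a ∈ s}.Finite := by
  have := hs.to_subtype
  refine ((List.finite_length_eq s n).image (List.map Subtype.val)).subset ?_
  rintro l ⟨hlen, hmem⟩
  exact ⟨l.pmap Subtype.mk hmem, by simpa using hlen, by simp [List.map_pmap]⟩

theorem originWalks_finite (n : ℕ) : (originWalks n).Finite := by
  refine (List.finite_length_eq_of_forall_mem
    (Set.finite_Icc ((-n, -n) : ℤ × ℤ) (n, n)) (n + 1)).subset ?_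
  rintro l ⟨hl, hlen, h0⟩
  refine ⟨hlen, fun a ha => ?_⟩
  obtain ⟨i, hi, rfl⟩ := List.mem_iff_getElem.mp ha
  have := hl.abs_getD_le h0 i hi
  rw [← List.getD_eq_getElem _ 0 hi]
  simp only [abs_le, Set.mem_Icc, Prod.le_def] at *
  omega

def bridgesOfLength (k : ℕ) : Set (List (ℤ × ℤ)) := {l | IsBridge l ∧ l.length = k}

theorem bridgeCount_succ (n : ℕ) : bridgeCount (n + 1) = (bridgesOfLength (n + 2)).ncard := rfl

theorem bridgesOfLength_subset_originWalks (n : ℕ) : bridgesOfLength (n + 1) ⊆ originWalks n :=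
  fun _ ⟨hl, hlen⟩ => ⟨hl.1, hlen, hl.2.2.1⟩

/-- For all integers `n, m ≥ 0` the number of bridges satisfies
`b_{n+m} ≥ b_n · b_m`. -/
theorem bridgeCount_supermultiplicative (n m : ℕ) :
    bridgeCount n * bridgeCount m ≤ bridgeCount (n + m) := by
  rcases n with _ | n
  · simp [bridgeCount]
  rcases m with _ | m
  · simp [bridgeCount]
  rw [show n + 1 + (m + 1) = n + m + 1 + 1 by omega, bridgeCount_succ, bridgeCount_succ,
    bridgeCount_succ, ← Set.ncard_prod]
  refine Set.ncard_le_ncard_of_injOn (fun p => glue p.1 p.2) ?_ ?_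
    ((originWalks_finite _).subset (bridgesOfLength_subset_originWalks _))
  · rintro ⟨l, r⟩ ⟨⟨hl, hll⟩, hr, hrl⟩
    refine ⟨isBridge_glue hl hr, ?_⟩
    rw [glue_length]
    omega
  · rintro ⟨l, r⟩ ⟨⟨-, hll⟩, hr, -⟩ ⟨l', r'⟩ ⟨⟨-, hll'⟩, hr', -⟩ h
    obtain ⟨rfl, rfl⟩ := glue_inj (hll.trans hll'.symm) hr.1.1 hr'.1.1
      (hr.2.2.1.trans hr'.2.2.1.symm) h
    rfl
end
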